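/- arXiv:2410.00989 — 6 statements merged into one kernel-verified Lean document; each statement's English description precedes it below -/
import Mathlib

section
/- Let (ω_j) be a strictly increasing sequence of positive reals and (c_j) a square-summable sequence with Σ c_j²/ω_j < ∞. If λ ∈ ℂ satisfies γλ Σ_{j=1}^∞ c_j²/(ω_j² + λ²) + 1 = 0 for some γ > 0 (equivalently Σ (c_j²/ω_j)(1/(λ−iω_j) − 1/(λ+iω_j)) + 2i/(γλ) = 0), then λ is not purely imaginary, i.e. Re λ ≠ 0. -/
open Complex

/-! On the imaginary axis `λ = i y` every term `c_j² / (ω_j² - y²)` of the series is real, so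
`γ λ Σ …` is purely imaginary and `γ λ Σ … + 1` has real part `1`. -/

theorem Complex.im_tsum_eq_zero {α : Type*} {f : α → ℂ} (hf : ∀ a, (f a).im = 0) :
    (∑' a, f a).im = 0 := by
  rw [← conj_eq_iff_im, conj_tsum]
  exact tsum_congr fun a => conj_eq_iff_im.mpr (hf a)

theorem Complex.sq_eq_neg_im_sq_of_re_eq_zero {z : ℂ} (hz : z.re = 0) :
    z ^ 2 = -((z.im ^ 2 : ℝ) : ℂ) := by
  conv_lhs => rw [← re_add_im z, hz]
  push_cast
  ring_nf
  rw [I_sq]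
  ring

theorem Complex.im_ofReal_sq_div_ofReal_sq_add_sq_eq_zero (a b : ℝ) {z : ℂ} (hz : z.re = 0) :
    ((a : ℂ) ^ 2 / ((b : ℂ) ^ 2 + z ^ 2)).im = 0 := by
  rw [sq_eq_neg_im_sq_of_re_eq_zero hz, ← sub_eq_add_neg, ← ofReal_pow, ← ofReal_pow,
    ← ofReal_sub, ← ofReal_div, ofReal_im]

theorem stmt_0_general (ω c : ℕ → ℝ)
    (γ : ℝ) (z : ℂ)
    (heq : (γ : ℂ) * z * (∑' j, ((c j : ℂ) ^ 2 / ((ω j : ℂ) ^ 2 + z ^ 2))) + 1 = 0) :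
    z.re ≠ 0 := by
  intro hre
  have hsum : (∑' j, ((c j : ℂ) ^ 2 / ((ω j : ℂ) ^ 2 + z ^ 2))).im = 0 :=
    im_tsum_eq_zero fun j => im_ofReal_sq_div_ofReal_sq_add_sq_eq_zero (c j) (ω j) hre
  simpa [hre, hsum] using congrArg re heq

/-- A root of the characteristic equation is not purely imaginary. -/
theorem stmt_0 (ω c : ℕ → ℝ) (hω : StrictMono ω) (hωpos : ∀ j, 0 < ω j)
    (hc2 : Summable (fun j => (c j) ^ 2))
    (hcω : Summable (fun j => (c j) ^ 2 / ω j))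
    (γ : ℝ) (hγ : 0 < γ) (z : ℂ) (hz0 : z ≠ 0)
    (hzω : ∀ j, z ≠ Complex.I * (ω j : ℂ) ∧ z ≠ -(Complex.I * (ω j : ℂ)))
    (heq : (γ : ℂ) * z * (∑' j, ((c j : ℂ) ^ 2 / ((ω j : ℂ) ^ 2 + z ^ 2))) + 1 = 0) :
    z.re ≠ 0 :=
  stmt_0_general ω c γ z heq
end

section
/- Let F be analytic on the closed disk {λ : |λ − iω| ≤ R₁} and write F(λ) = F(iω) + (λ − iω)F′(iω) + (λ − iω)²ρ(λ) with ρ analytic and |ρ| ≤ M on this disk, where F′(iω) ≠ 0. Set λ* = iω − F(iω)/F′(iω), c = |F(iω)/F′(iω)|, b = √(|F′(iω)|/(4M)). Assume 0 < M < |F′(iω)|²/(4|F(iω)|) and that R > 0 satisfies √R ∈ (b − √(b²−c), b + √(b²−c)) and the closed disk {|λ − λ*| ≤ R} is contained in {|λ − iω| ≤ R₁}. Then F has exactly one zero (counted with multiplicity) in the open disk {λ : |λ − λ*| < R}. -/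
/-! On the disc `|λ - λ*| ≤ R` the expansion reads `F λ = F'(iω) (λ - T λ)` with
`T λ = λ* - (λ - iω)² ρ(λ) / F'(iω)`, and the condition on `√R` yields
`M (R + c)² < |F'(iω)| R`: `T` maps the disc into a strictly smaller concentric disc. Such a
holomorphic map has a unique fixed point, at which `|T'| < 1` (Earle–Hamilton): by Schwarz–Pick it
contracts the pseudo-hyperbolic distance by a fixed factor `< 1`, so its iterates converge. The
fixed points of `T` are the zeros of `F`, and `F' = F'(iω) (1 - T') ≠ 0` there. -/

open Complex Metric

open Set Filter Function
open scoped ComplexConjugate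

lemma two_mul_div_one_add_sq_lt_one {k : ℝ} (hk : k < 1) : 2 * k / (1 + k ^ 2) < 1 := by
  rw [div_lt_one (by positivity)]
  nlinarith [sq_pos_of_pos (sub_pos.2 hk)]

namespace Complex

/-- `‖diskMoebius a z‖` is the pseudo-hyperbolic distance between `a` and `z`. -/
noncomputable def diskMoebius (a z : ℂ) : ℂ := (z - a) / (1 - conj a * z)

lemma one_sub_conj_mul_ne_zero {a z : ℂ} (h : ‖a‖ * ‖z‖ < 1) : 1 - conj a * z ≠ 0 := by
  refine sub_ne_zero.mpr fun h1 => h.ne ?_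
  rw [← Complex.norm_conj a, ← norm_mul, ← h1, norm_one]

lemma sq_norm_one_sub_conj_mul (a z : ℂ) :
    ‖1 - conj a * z‖ ^ 2 = ‖z - a‖ ^ 2 + (1 - ‖a‖ ^ 2) * (1 - ‖z‖ ^ 2) := by
  simp only [Complex.sq_norm, Complex.normSq_apply, sub_re, sub_im, mul_re, mul_im, conj_re,
    conj_im, one_re, one_im]
  ring

lemma norm_diskMoebius_lt_one {a z : ℂ} (ha : ‖a‖ < 1) (hz : ‖z‖ < 1) :
    ‖diskMoebius a z‖ < 1 := by
  have hd : 1 - conj a * z ≠ 0 :=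
    one_sub_conj_mul_ne_zero (by nlinarith [norm_nonneg a, norm_nonneg z])
  rw [diskMoebius, norm_div, div_lt_one (norm_pos_iff.mpr hd)]
  refine lt_of_pow_lt_pow_left₀ 2 (norm_nonneg _) ?_
  rw [sq_norm_one_sub_conj_mul]
  nlinarith [mul_pos (by nlinarith [norm_nonneg a] : (0:ℝ) < 1 - ‖a‖ ^ 2)
    (by nlinarith [norm_nonneg z] : (0:ℝ) < 1 - ‖z‖ ^ 2)]

lemma norm_diskMoebius_le {a z : ℂ} {k : ℝ} (hk : k < 1) (ha : ‖a‖ ≤ k) (hz : ‖z‖ ≤ k) :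
    ‖diskMoebius a z‖ ≤ 2 * k / (1 + k ^ 2) := by
  have h0a := norm_nonneg a
  have h0z := norm_nonneg z
  have hk0 : 0 ≤ k := h0a.trans ha
  have hd : 1 - conj a * z ≠ 0 := one_sub_conj_mul_ne_zero (by nlinarith)
  have hD : ‖1 - conj a * z‖ ≤ 1 + k ^ 2 := by
    calc ‖1 - conj a * z‖ ≤ ‖(1 : ℂ)‖ + ‖conj a * z‖ := norm_sub_le _ _
      _ ≤ 1 + k ^ 2 := by
        rw [norm_one, norm_mul, Complex.norm_conj]; nlinarith
  have hP : (1 - k ^ 2) ^ 2 ≤ (1 - ‖a‖ ^ 2) * (1 - ‖z‖ ^ 2) := by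
    rw [sq]
    exact mul_le_mul (by nlinarith) (by nlinarith) (by nlinarith) (by nlinarith)
  have hid := sq_norm_one_sub_conj_mul a z
  rw [diskMoebius, norm_div, div_le_div_iff₀ (norm_pos_iff.mpr hd) (by positivity)]
  refine le_of_pow_le_pow_left₀ two_ne_zero (by positivity) ?_
  have hD2 : ‖1 - conj a * z‖ ^ 2 ≤ (1 + k ^ 2) ^ 2 := pow_le_pow_left₀ (norm_nonneg _) hD 2
  nlinarith [mul_le_mul_of_nonneg_left hD2 (sq_nonneg (1 - k ^ 2))]

lemma diskMoebius_neg_diskMoebius {a z : ℂ} (ha : ‖a‖ < 1) (hz : ‖z‖ < 1) :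
    diskMoebius (-a) (diskMoebius a z) = z := by
  have hd : 1 - conj a * z ≠ 0 :=
    one_sub_conj_mul_ne_zero (by nlinarith [norm_nonneg a, norm_nonneg z])
  set w := diskMoebius a z
  have hwD : w * (1 - conj a * z) = z - a := div_mul_cancel₀ _ hd
  have key : w + a = z * (1 + conj a * w) := by
    apply mul_right_cancel₀ hd
    linear_combination (1 - conj a * z) * hwD
  have hden : 1 + conj a * w ≠ 0 := by
    have hw1 := norm_diskMoebius_lt_one ha hz
    simpa using one_sub_conj_mul_ne_zero (a := -a) (z := w)
      (by rw [norm_neg]; nlinarith [norm_nonneg a, norm_nonneg w])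
  rw [diskMoebius, map_neg, sub_neg_eq_add, neg_mul, sub_neg_eq_add, key,
    mul_div_cancel_right₀ _ hden]

lemma hasDerivAt_diskMoebius {a z : ℂ} (h : 1 - conj a * z ≠ 0) :
    HasDerivAt (diskMoebius a) ((1 - conj a * a) / (1 - conj a * z) ^ 2) z := by
  refine (((hasDerivAt_id z).sub_const a).div
    (((hasDerivAt_id z).const_mul (conj a)).const_sub 1) h).congr_deriv ?_
  simp only [id]
  ring

@[simp]
lemma diskMoebius_self (a : ℂ) : diskMoebius a a = 0 := by simp [diskMoebius]

@[simp]
lemma diskMoebius_neg_zero (a : ℂ) : diskMoebius (-a) 0 = a := by simp [diskMoebius]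

lemma diskMoebius_eq_zero_iff {a z : ℂ} (h : ‖a‖ * ‖z‖ < 1) : diskMoebius a z = 0 ↔ z = a := by
  rw [diskMoebius, div_eq_zero_iff, sub_eq_zero, or_iff_left (one_sub_conj_mul_ne_zero h)]

lemma mapsTo_diskMoebius {a : ℂ} (ha : a ∈ ball (0 : ℂ) 1) :
    MapsTo (diskMoebius a) (ball 0 1) (ball 0 1) := fun z hz => by
  rw [mem_ball_zero_iff] at *
  exact norm_diskMoebius_lt_one ha hz

lemma differentiableOn_diskMoebius {a : ℂ} (ha : ‖a‖ ≤ 1) :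
    DifferentiableOn ℂ (diskMoebius a) (ball 0 1) := fun z hz =>
  (hasDerivAt_diskMoebius (one_sub_conj_mul_ne_zero (mul_lt_one_of_nonneg_of_lt_one_right ha
    (norm_nonneg z) (mem_ball_zero_iff.mp hz)))).differentiableAt.differentiableWithinAt

lemma dist_le_two_mul_norm_diskMoebius {a z : ℂ} (h : ‖a‖ * ‖z‖ < 1) :
    dist a z ≤ 2 * ‖diskMoebius a z‖ := by
  have hD : ‖1 - conj a * z‖ ≤ 2 := by
    calc ‖1 - conj a * z‖ ≤ ‖(1 : ℂ)‖ + ‖conj a * z‖ := norm_sub_le _ _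
      _ ≤ 2 := by rw [norm_one, norm_mul, Complex.norm_conj]; linarith
  rw [dist_comm, dist_eq_norm, ← div_mul_cancel₀ (z - a) (one_sub_conj_mul_ne_zero h), norm_mul,
    ← diskMoebius, mul_comm 2]
  exact mul_le_mul_of_nonneg_left hD (norm_nonneg _)

noncomputable def moebiusConj (f : ℂ → ℂ) (x w : ℂ) : ℂ :=
  diskMoebius (f x) (f (diskMoebius (-x) w))

@[simp]
lemma moebiusConj_zero (f : ℂ → ℂ) (x : ℂ) : moebiusConj f x 0 = 0 := by
  simp [moebiusConj]

section SchwarzPick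

variable {f : ℂ → ℂ} {k : ℝ}

lemma mapsTo_moebiusConj (hmaps : MapsTo f (ball 0 1) (closedBall 0 k)) (hk : k < 1)
    {x : ℂ} (hx : x ∈ ball (0 : ℂ) 1) :
    MapsTo (moebiusConj f x) (ball 0 1) (closedBall 0 (2 * k / (1 + k ^ 2))) := fun w hw => by
  have hw' := mapsTo_diskMoebius (a := -x) (by simpa using hx) hw
  exact mem_closedBall_zero_iff.mpr (norm_diskMoebius_le hk
    (mem_closedBall_zero_iff.mp (hmaps hx)) (mem_closedBall_zero_iff.mp (hmaps hw')))

lemma differentiableOn_moebiusConj (hf : DifferentiableOn ℂ f (ball 0 1))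
    (hmaps : MapsTo f (ball 0 1) (closedBall 0 k)) (hk : k < 1) {x : ℂ}
    (hx : x ∈ ball (0 : ℂ) 1) : DifferentiableOn ℂ (moebiusConj f x) (ball 0 1) := by
  have hfx : ‖f x‖ ≤ 1 := (mem_closedBall_zero_iff.mp (hmaps hx)).trans hk.le
  unfold moebiusConj
  refine ((differentiableOn_diskMoebius hfx).comp hf ?_).comp
    (differentiableOn_diskMoebius (by simpa using (mem_ball_zero_iff.mp hx).le))
    (mapsTo_diskMoebius (by simpa using hx))
  exact fun w hw => mem_ball_zero_iff.mpr ((mem_closedBall_zero_iff.mp (hmaps hw)).trans_lt hk)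

/-- Schwarz–Pick; `2k / (1 + k²)` is the pseudo-hyperbolic diameter of `closedBall 0 k`. -/
lemma norm_diskMoebius_apply_le (hf : DifferentiableOn ℂ f (ball 0 1))
    (hmaps : MapsTo f (ball 0 1) (closedBall 0 k)) (hk : k < 1) {x y : ℂ}
    (hx : x ∈ ball (0 : ℂ) 1) (hy : y ∈ ball (0 : ℂ) 1) :
    ‖diskMoebius (f x) (f y)‖ ≤ 2 * k / (1 + k ^ 2) * ‖diskMoebius x y‖ := by
  have := dist_le_div_mul_dist_of_mapsTo_ball (differentiableOn_moebiusConj hf hmaps hk hx)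
    ((mapsTo_moebiusConj hmaps hk hx).mono_right (by rw [moebiusConj_zero]))
    (mapsTo_diskMoebius hx hy)
  simpa [moebiusConj,
    diskMoebius_neg_diskMoebius (mem_ball_zero_iff.mp hx) (mem_ball_zero_iff.mp hy)] using this

end SchwarzPick

section FixedPoint

variable {f : ℂ → ℂ} {k : ℝ}

lemma hasDerivAt_moebiusConj_zero {a : ℂ} (ha : a ∈ ball (0 : ℂ) 1) (hfa : IsFixedPt f a)
    (hda : DifferentiableAt ℂ f a) : HasDerivAt (moebiusConj f a) (deriv f a) 0 := by
  have hD : 1 - conj a * a ≠ 0 :=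
    one_sub_conj_mul_ne_zero (by nlinarith [norm_nonneg a, mem_ball_zero_iff.mp ha])
  have h₁ : HasDerivAt (diskMoebius (-a)) (1 - conj a * a) 0 := by
    simpa using hasDerivAt_diskMoebius (a := -a) (z := 0) (by simp)
  have h₂ := (hasDerivAt_diskMoebius hD).comp_of_eq 0
    (hda.hasDerivAt.comp_of_eq 0 h₁ (diskMoebius_neg_zero a).symm) (by simpa using hfa.eq.symm)
  have hconj : moebiusConj f a = diskMoebius a ∘ f ∘ diskMoebius (-a) := by
    ext w; simp [moebiusConj, hfa.eq]
  rw [hconj]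
  refine h₂.congr_deriv ?_
  field_simp

lemma norm_deriv_le_of_isFixedPt (hf : DifferentiableOn ℂ f (ball 0 1))
    (hmaps : MapsTo f (ball 0 1) (closedBall 0 k)) (hk : k < 1) {a : ℂ}
    (ha : a ∈ ball (0 : ℂ) 1) (hfa : IsFixedPt f a) :
    ‖deriv f a‖ ≤ 2 * k / (1 + k ^ 2) := by
  have := norm_deriv_le_div_of_mapsTo_ball (differentiableOn_moebiusConj hf hmaps hk ha)
    ((mapsTo_moebiusConj hmaps hk ha).mono_right (by rw [moebiusConj_zero])) one_pos
  rwa [(hasDerivAt_moebiusConj_zero ha hfa (hf.differentiableAt (isOpen_ball.mem_nhds ha))).deriv,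
    div_one] at this

lemma eq_of_isFixedPt (hf : DifferentiableOn ℂ f (ball 0 1))
    (hmaps : MapsTo f (ball 0 1) (closedBall 0 k)) (hk : k < 1) {a b : ℂ}
    (ha : a ∈ ball (0 : ℂ) 1) (hb : b ∈ ball (0 : ℂ) 1) (hfa : IsFixedPt f a)
    (hfb : IsFixedPt f b) : b = a := by
  have h := norm_diskMoebius_apply_le hf hmaps hk ha hb
  rw [hfa.eq, hfb.eq] at h
  have h0 : ‖diskMoebius a b‖ = 0 := by
    nlinarith [norm_nonneg (diskMoebius a b), two_mul_div_one_add_sq_lt_one hk]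
  rw [mem_ball_zero_iff] at ha hb
  exact (diskMoebius_eq_zero_iff (by nlinarith [norm_nonneg a, norm_nonneg b])).mp
    (norm_eq_zero.mp h0)

lemma exists_isFixedPt (hf : DifferentiableOn ℂ f (ball 0 1))
    (hmaps : MapsTo f (ball 0 1) (closedBall 0 k)) (hk : k < 1) :
    ∃ a ∈ closedBall (0 : ℂ) k, IsFixedPt f a := by
  have hk0 : 0 ≤ k := nonempty_closedBall.mp ⟨_, hmaps (mem_ball_self one_pos)⟩
  set K := 2 * k / (1 + k ^ 2)
  have hK0 : 0 ≤ K := by positivity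
  set u : ℕ → ℂ := fun n => f^[n] 0
  have hstep (n : ℕ) : f (u n) = u (n + 1) := (iterate_succ_apply' f n 0).symm
  have hmem (n : ℕ) : u n ∈ closedBall 0 k := by
    induction n with
    | zero => exact mem_closedBall_self hk0
    | succ n ih => exact hstep n ▸ hmaps (closedBall_subset_ball hk ih)
  have hball (n : ℕ) : u n ∈ ball 0 1 := closedBall_subset_ball hk (hmem n)
  have hgeo (n : ℕ) : ‖diskMoebius (u n) (u (n + 1))‖ ≤ ‖diskMoebius (u 0) (u 1)‖ * K ^ n := by
    induction n with
    | zero => simp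
    | succ n ih =>
      calc ‖diskMoebius (u (n + 1)) (u (n + 1 + 1))‖
          ≤ K * ‖diskMoebius (u n) (u (n + 1))‖ := by
            simpa only [hstep] using norm_diskMoebius_apply_le hf hmaps hk (hball n) (hball (n + 1))
        _ ≤ ‖diskMoebius (u 0) (u 1)‖ * K ^ (n + 1) := by
            rw [pow_succ]
            nlinarith
  have hdist (n : ℕ) : dist (u n) (u (n + 1)) ≤ 2 * ‖diskMoebius (u 0) (u 1)‖ * K ^ n := by
    have hprod : ‖u n‖ * ‖u (n + 1)‖ < 1 := by
      have := mem_ball_zero_iff.mp (hball n); have := mem_ball_zero_iff.mp (hball (n + 1))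
      nlinarith [norm_nonneg (u n), norm_nonneg (u (n + 1))]
    linarith [dist_le_two_mul_norm_diskMoebius hprod, hgeo n]
  obtain ⟨a, ha⟩ := cauchySeq_tendsto_of_complete
    (cauchySeq_of_le_geometric K _ (two_mul_div_one_add_sq_lt_one hk) hdist)
  have hak : a ∈ closedBall 0 k := isClosed_closedBall.mem_of_tendsto ha (Eventually.of_forall hmem)
  exact ⟨a, hak, isFixedPt_of_tendsto_iterate ha
    (hf.differentiableAt (isOpen_ball.mem_nhds (closedBall_subset_ball hk hak))).continuousAt⟩

end FixedPoint

theorem exists_isFixedPt_ball_zero_one {f : ℂ → ℂ} {k : ℝ}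
    (hf : DifferentiableOn ℂ f (ball 0 1)) (hmaps : MapsTo f (ball 0 1) (closedBall 0 k))
    (hk : k < 1) :
    ∃ a ∈ ball (0 : ℂ) 1, IsFixedPt f a ∧ ‖deriv f a‖ < 1 ∧
      ∀ z ∈ ball (0 : ℂ) 1, IsFixedPt f z → z = a := by
  obtain ⟨a, hak, hfa⟩ := exists_isFixedPt hf hmaps hk
  have ha := closedBall_subset_ball hk hak
  exact ⟨a, ha, hfa, (norm_deriv_le_of_isFixedPt hf hmaps hk ha hfa).trans_lt
    (two_mul_div_one_add_sq_lt_one hk), fun z hz hfz => eq_of_isFixedPt hf hmaps hk ha hz hfa hfz⟩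

lemma dist_add_ofReal_mul_self {c w : ℂ} {r : ℝ} (hr : 0 < r) :
    dist (c + r * w) c = r * ‖w‖ := by
  rw [dist_eq_norm, add_sub_cancel_left, norm_mul, Complex.norm_real, Real.norm_of_nonneg hr.le]

theorem exists_isFixedPt_of_mapsTo_closedBall {f : ℂ → ℂ} {c : ℂ} {r s : ℝ} (hr : 0 < r)
    (hs : s < r) (hf : DifferentiableOn ℂ f (ball c r))
    (hmaps : MapsTo f (ball c r) (closedBall c s)) :
    ∃ a ∈ ball c r, IsFixedPt f a ∧ ‖deriv f a‖ < 1 ∧ ∀ z ∈ ball c r, IsFixedPt f z → z = a := by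
  have hr' : (r : ℂ) ≠ 0 := ofReal_ne_zero.mpr hr.ne'
  set e : ℂ → ℂ := fun w => c + r * w with he
  set g : ℂ → ℂ := fun w => (f (e w) - c) / r with hg
  have hmem {w : ℂ} : e w ∈ ball c r ↔ w ∈ ball 0 1 := by
    rw [mem_ball, mem_ball_zero_iff, he, dist_add_ofReal_mul_self hr, mul_lt_iff_lt_one_right hr]
  have hsurj {z : ℂ} : e ((z - c) / r) = z := by simp only [he]; field_simp; ring
  have hfix {w : ℂ} : IsFixedPt g w ↔ IsFixedPt f (e w) := by
    simp only [IsFixedPt, hg, he, div_eq_iff hr']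
    constructor <;> intro h <;> linear_combination h
  have hderiv {w : ℂ} (hw : w ∈ ball 0 1) : HasDerivAt g (deriv f (e w)) w := by
    have := (((hf.differentiableAt (isOpen_ball.mem_nhds (hmem.2 hw))).hasDerivAt.comp w
      ((hasDerivAt_id w).const_mul (r : ℂ) |>.const_add c)).sub_const c).div_const (r : ℂ)
    exact this.congr_deriv (by field_simp)
  have hgmaps : MapsTo g (ball 0 1) (closedBall 0 (s / r)) := fun w hw => by
    have := hmaps (hmem.2 hw)
    rw [mem_closedBall, dist_eq_norm] at this
    rw [mem_closedBall_zero_iff, hg, norm_div, Complex.norm_real, Real.norm_of_nonneg hr.le]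
    exact div_le_div_of_nonneg_right this hr.le
  obtain ⟨a, ha, hfa, hda, huniq⟩ := exists_isFixedPt_ball_zero_one
    (fun w hw => (hderiv hw).differentiableAt.differentiableWithinAt) hgmaps ((div_lt_one hr).2 hs)
  refine ⟨e a, hmem.2 ha, hfix.1 hfa, (hderiv ha).deriv ▸ hda, fun z hz hfz => ?_⟩
  have hz' : (z - c) / r ∈ ball (0 : ℂ) 1 := hmem.1 (hsurj ▸ hz)
  rw [← hsurj (z := z), huniq _ hz' (hfix.2 (hsurj ▸ hfz))]

end Complex

lemma mul_sq_add_lt_of_sqrt_mem_Ioo {R c d M b : ℝ} (hR : 0 < R) (hc : 0 ≤ c) (hd : 0 < d)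
    (hb : b = √(d / (4 * M))) (h₁ : b - √(b ^ 2 - c) < √R) (h₂ : √R < b + √(b ^ 2 - c)) :
    M * (R + c) ^ 2 < d * R := by
  rcases le_or_gt M 0 with hM | hM
  · nlinarith [sq_nonneg (R + c)]
  have hb2 : b ^ 2 = d / (4 * M) := by rw [hb, Real.sq_sqrt (by positivity)]
  have hδ : √(b ^ 2 - c) ^ 2 = b ^ 2 - c := Real.sq_sqrt (Real.sqrt_pos.mp (by linarith)).le
  have hsq : (√R - b) ^ 2 < √(b ^ 2 - c) ^ 2 := sq_lt_sq' (by linarith) (by linarith)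
  have hlin : R + c < 2 * b * √R := by nlinarith [Real.sq_sqrt hR.le]
  have hquad : (R + c) ^ 2 < 4 * b ^ 2 * R := by
    nlinarith [Real.sq_sqrt hR.le, pow_lt_pow_left₀ hlin (by positivity) two_ne_zero]
  rw [hb2] at hquad
  calc M * (R + c) ^ 2 < M * (d / (4 * M) * 4 * R) := by gcongr; linarith
    _ = d * R := by field_simp

lemma mapsTo_sub_sq_mul_div {𝕜 : Type*} [NormedField 𝕜] {ρ : 𝕜 → 𝕜} {A p d : 𝕜} {R M : ℝ}
    (hρ : ∀ z ∈ closedBall p R, ‖ρ z‖ ≤ M) :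
    MapsTo (fun z => p - (z - A) ^ 2 * ρ z / d) (closedBall p R)
      (closedBall p (M * (R + ‖p - A‖) ^ 2 / ‖d‖)) := fun z hz => by
  have hzA : ‖z - A‖ ≤ R + ‖p - A‖ :=
    (norm_sub_le_norm_sub_add_norm_sub z p A).trans (by gcongr; exact mem_closedBall_iff_norm.mp hz)
  rw [mem_closedBall, dist_eq_norm, sub_sub_cancel_left, norm_neg, norm_div, norm_mul, norm_pow,
    mul_comm M]
  gcongr
  exact hρ z hz

theorem stmt_3_general (F ρ : ℂ → ℂ) (ω R₁ R M : ℝ)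
    (hR : 0 < R)
    (hρ : AnalyticOnNhd ℂ ρ (closedBall (Complex.I * (ω : ℂ)) R₁))
    (hDer : deriv F (Complex.I * (ω : ℂ)) ≠ 0)
    (hexp : ∀ z ∈ closedBall (Complex.I * (ω : ℂ)) R₁,
      F z = F (Complex.I * (ω : ℂ))
        + (z - Complex.I * (ω : ℂ)) * deriv F (Complex.I * (ω : ℂ))
        + (z - Complex.I * (ω : ℂ)) ^ 2 * ρ z)
    (hρM : ∀ z ∈ closedBall (Complex.I * (ω : ℂ)) R₁, ‖ρ z‖ ≤ M)
    (lamStar : ℂ) (b c : ℝ)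
    (hlam : lamStar = Complex.I * (ω : ℂ)
      - F (Complex.I * (ω : ℂ)) / deriv F (Complex.I * (ω : ℂ)))
    (hc : c = ‖F (Complex.I * (ω : ℂ)) / deriv F (Complex.I * (ω : ℂ))‖)
    (hb : b = Real.sqrt (‖deriv F (Complex.I * (ω : ℂ))‖ / (4 * M)))
    (hsq1 : b - Real.sqrt (b ^ 2 - c) < Real.sqrt R)
    (hsq2 : Real.sqrt R < b + Real.sqrt (b ^ 2 - c))
    (hsub : closedBall lamStar R ⊆ closedBall (Complex.I * (ω : ℂ)) R₁) :
    ∃ z₀ ∈ ball lamStar R, F z₀ = 0 ∧ deriv F z₀ ≠ 0 ∧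
      ∀ z ∈ ball lamStar R, F z = 0 → z = z₀ := by
  set A := Complex.I * (ω : ℂ)
  set F₁ := deriv F A
  set T : ℂ → ℂ := fun z => lamStar - (z - A) ^ 2 * ρ z / F₁ with hT
  have hball : ball lamStar R ⊆ closedBall A R₁ := ball_subset_closedBall.trans hsub
  have hFT {z : ℂ} (hz : z ∈ ball lamStar R) : F z = F₁ * (z - T z) := by
    rw [hexp z (hball hz), hT, hlam]; field_simp; ring
  have hcA : ‖lamStar - A‖ = c := by rw [hc, hlam, sub_sub_cancel_left, norm_neg]
  have hs : M * (R + c) ^ 2 / ‖F₁‖ < R := (div_lt_iff₀' (norm_pos_iff.2 hDer)).2 <|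
    mul_sq_add_lt_of_sqrt_mem_Ioo hR (hc ▸ norm_nonneg _) (norm_pos_iff.2 hDer) hb hsq1 hsq2
  have hmaps : MapsTo T (ball lamStar R) (closedBall lamStar (M * (R + c) ^ 2 / ‖F₁‖)) :=
    hcA ▸ (mapsTo_sub_sq_mul_div fun z hz => hρM z (hsub hz)).mono_left ball_subset_closedBall
  have hTd : DifferentiableOn ℂ T (ball lamStar R) := fun z hz =>
    (((((differentiableAt_id.sub_const A).pow 2).mul (hρ z (hball hz)).differentiableAt).div_const
      F₁).const_sub lamStar).differentiableWithinAt
  obtain ⟨z₀, hz₀, hfix, hderiv, huniq⟩ := exists_isFixedPt_of_mapsTo_closedBall hR hs hTd hmaps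
  refine ⟨z₀, hz₀, by rw [hFT hz₀, hfix.eq, sub_self, mul_zero], ?_, fun z hz hFz => huniq z hz ?_⟩
  · have hT' := (hTd.differentiableAt (isOpen_ball.mem_nhds hz₀)).hasDerivAt
    have hF' : HasDerivAt F (F₁ * (1 - deriv T z₀)) z₀ :=
      (((hasDerivAt_id z₀).sub hT').const_mul F₁).congr_of_eventuallyEq
        (eventually_of_mem (isOpen_ball.mem_nhds hz₀) fun z hz => hFT hz)
    rw [hF'.deriv]
    exact mul_ne_zero hDer (sub_ne_zero.2 fun h => by simp [← h] at hderiv)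
  · rw [hFT hz, mul_eq_zero, sub_eq_zero] at hFz
    exact (hFz.resolve_left hDer).symm

/-- Rouché-type localization: `F` has exactly one (simple) zero in the disk
around `λ* = iω - F(iω)/F'(iω)`. -/
theorem stmt_3 (F ρ : ℂ → ℂ) (ω R₁ R M : ℝ)
    (hR₁ : 0 < R₁) (hR : 0 < R)
    (hF : AnalyticOnNhd ℂ F (closedBall (Complex.I * (ω : ℂ)) R₁))
    (hρ : AnalyticOnNhd ℂ ρ (closedBall (Complex.I * (ω : ℂ)) R₁))
    (hDer : deriv F (Complex.I * (ω : ℂ)) ≠ 0)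
    (hexp : ∀ z ∈ closedBall (Complex.I * (ω : ℂ)) R₁,
      F z = F (Complex.I * (ω : ℂ))
        + (z - Complex.I * (ω : ℂ)) * deriv F (Complex.I * (ω : ℂ))
        + (z - Complex.I * (ω : ℂ)) ^ 2 * ρ z)
    (hρM : ∀ z ∈ closedBall (Complex.I * (ω : ℂ)) R₁, ‖ρ z‖ ≤ M)
    (hM0 : 0 < M)
    (hM : M < (‖deriv F (Complex.I * (ω : ℂ))‖) ^ 2 /
      (4 * ‖F (Complex.I * (ω : ℂ))‖))
    (lamStar : ℂ) (b c : ℝ)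
    (hlam : lamStar = Complex.I * (ω : ℂ)
      - F (Complex.I * (ω : ℂ)) / deriv F (Complex.I * (ω : ℂ)))
    (hc : c = ‖F (Complex.I * (ω : ℂ)) / deriv F (Complex.I * (ω : ℂ))‖)
    (hb : b = Real.sqrt (‖deriv F (Complex.I * (ω : ℂ))‖ / (4 * M)))
    (hsq1 : b - Real.sqrt (b ^ 2 - c) < Real.sqrt R)
    (hsq2 : Real.sqrt R < b + Real.sqrt (b ^ 2 - c))
    (hsub : closedBall lamStar R ⊆ closedBall (Complex.I * (ω : ℂ)) R₁) :
    ∃ z₀ ∈ ball lamStar R, F z₀ = 0 ∧ deriv F z₀ ≠ 0 ∧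
      ∀ z ∈ ball lamStar R, F z = 0 → z = z₀ :=
  stmt_3_general F ρ ω R₁ R M hR hρ hDer hexp hρM lamStar b c hlam hc hb hsq1 hsq2 hsub
end

section
/- Under the hypotheses of the Rouché-type localization lemma, for all λ on the circle |λ − λ*| = R one has the strict inequality |(λ − iω)²ρ(λ)| < |F′(iω)|·R, where λ* = iω − F(iω)/F′(iω). -/
open Complex Metric

/-! Put `λ₀ = iω`. Since `λ* - λ₀ = -F(λ₀)/F'(λ₀)` has norm `c`, every `λ` on the circle satisfies
`|λ - λ₀| ≤ R + c`, so `|(λ - λ₀)² ρ(λ)| ≤ (R + c)² M`. The window for `√R` says exactly that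
`(√R - b)² < b² - c`, i.e. `R + c < 2b√R`, and squaring this gives `(R + c)² M < 4b²M R = |F'(λ₀)| R`. -/

lemma add_lt_two_mul_mul_sqrt_of_sqrt_mem_Ioo {b c R : ℝ} (hR : 0 ≤ R)
    (hlow : b - √(b ^ 2 - c) < √R) (hupp : √R < b + √(b ^ 2 - c)) :
    R + c < 2 * b * √R := by
  have hpos : 0 < √(b ^ 2 - c) := by linarith
  have hdisc : √(b ^ 2 - c) ^ 2 = b ^ 2 - c := Real.sq_sqrt (Real.sqrt_pos.mp hpos).le
  have hsq : (√R - b) ^ 2 < √(b ^ 2 - c) ^ 2 := sq_lt_sq' (by linarith) (by linarith)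
  nlinarith [Real.sq_sqrt hR]

lemma sq_mul_lt_of_add_lt_two_mul_sqrt_mul_sqrt {A M R c : ℝ} (hA : 0 ≤ A) (hM : 0 < M)
    (hR : 0 ≤ R) (hc : 0 ≤ c) (h : R + c < 2 * √(A / (4 * M)) * √R) :
    (R + c) ^ 2 * M < A * R := by
  have hsq : (R + c) ^ 2 < (2 * √(A / (4 * M)) * √R) ^ 2 :=
    pow_lt_pow_left₀ h (by positivity) two_ne_zero
  rw [mul_pow, mul_pow, Real.sq_sqrt (by positivity), Real.sq_sqrt hR] at hsq
  calc (R + c) ^ 2 * M < 2 ^ 2 * (A / (4 * M)) * R * M := by gcongr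
    _ = A * R := by field_simp; ring

theorem stmt_4_general (F ρ : ℂ → ℂ) (ω R₁ R M : ℝ)
    (hρM : ∀ z ∈ closedBall (Complex.I * (ω : ℂ)) R₁, ‖ρ z‖ ≤ M)
    (hM0 : 0 < M)
    (lamStar : ℂ) (b c : ℝ)
    (hlam : lamStar = Complex.I * (ω : ℂ)
      - F (Complex.I * (ω : ℂ)) / deriv F (Complex.I * (ω : ℂ)))
    (hc : c = ‖F (Complex.I * (ω : ℂ)) / deriv F (Complex.I * (ω : ℂ))‖)
    (hb : b = Real.sqrt (‖deriv F (Complex.I * (ω : ℂ))‖ / (4 * M)))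
    (hsq1 : b - Real.sqrt (b ^ 2 - c) < Real.sqrt R)
    (hsq2 : Real.sqrt R < b + Real.sqrt (b ^ 2 - c))
    (hsub : closedBall lamStar R ⊆ closedBall (Complex.I * (ω : ℂ)) R₁) :
    ∀ z : ℂ, ‖z - lamStar‖ = R →
      ‖(z - Complex.I * (ω : ℂ)) ^ 2 * ρ z‖
        < ‖deriv F (Complex.I * (ω : ℂ))‖ * R := by
  intro z hz
  have hR : 0 ≤ R := hz ▸ norm_nonneg _
  have hcentre : ‖lamStar - Complex.I * ω‖ = c := by
    rw [hlam, hc, sub_sub_cancel_left, norm_neg]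
  have hdist : ‖z - Complex.I * ω‖ ≤ R + c :=
    hz ▸ hcentre ▸ norm_sub_le_norm_sub_add_norm_sub z lamStar (Complex.I * ω)
  have hρz : ‖ρ z‖ ≤ M := hρM z (hsub (mem_closedBall.2 (dist_eq_norm z lamStar ▸ hz.le)))
  have hkey : (R + c) ^ 2 * M < ‖deriv F (Complex.I * ω)‖ * R :=
    sq_mul_lt_of_add_lt_two_mul_sqrt_mul_sqrt (norm_nonneg _) hM0 hR (hc ▸ norm_nonneg _)
      (hb ▸ add_lt_two_mul_mul_sqrt_of_sqrt_mem_Ioo hR hsq1 hsq2)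
  calc ‖(z - Complex.I * ω) ^ 2 * ρ z‖ = ‖z - Complex.I * ω‖ ^ 2 * ‖ρ z‖ := by
        rw [norm_mul, norm_pow]
    _ ≤ (R + c) ^ 2 * M := by gcongr
    _ < ‖deriv F (Complex.I * ω)‖ * R := hkey

/-- On the boundary circle `|λ - λ*| = R` the remainder dominates:
`|(λ - iω)² ρ(λ)| < |F'(iω)| · R`. -/
theorem stmt_4 (F ρ : ℂ → ℂ) (ω R₁ R M : ℝ)
    (hR₁ : 0 < R₁) (hR : 0 < R)
    (hF : AnalyticOnNhd ℂ F (closedBall (Complex.I * (ω : ℂ)) R₁))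
    (hDer : deriv F (Complex.I * (ω : ℂ)) ≠ 0)
    (hexp : ∀ z ∈ closedBall (Complex.I * (ω : ℂ)) R₁,
      F z = F (Complex.I * (ω : ℂ))
        + (z - Complex.I * (ω : ℂ)) * deriv F (Complex.I * (ω : ℂ))
        + (z - Complex.I * (ω : ℂ)) ^ 2 * ρ z)
    (hρM : ∀ z ∈ closedBall (Complex.I * (ω : ℂ)) R₁, ‖ρ z‖ ≤ M)
    (hM0 : 0 < M)
    (hM : M < (‖deriv F (Complex.I * (ω : ℂ))‖) ^ 2 /
      (4 * ‖F (Complex.I * (ω : ℂ))‖))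
    (lamStar : ℂ) (b c : ℝ)
    (hlam : lamStar = Complex.I * (ω : ℂ)
      - F (Complex.I * (ω : ℂ)) / deriv F (Complex.I * (ω : ℂ)))
    (hc : c = ‖F (Complex.I * (ω : ℂ)) / deriv F (Complex.I * (ω : ℂ))‖)
    (hb : b = Real.sqrt (‖deriv F (Complex.I * (ω : ℂ))‖ / (4 * M)))
    (hsq1 : b - Real.sqrt (b ^ 2 - c) < Real.sqrt R)
    (hsq2 : Real.sqrt R < b + Real.sqrt (b ^ 2 - c))
    (hsub : closedBall lamStar R ⊆ closedBall (Complex.I * (ω : ℂ)) R₁) :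
    ∀ z : ℂ, ‖z - lamStar‖ = R →
      ‖(z - Complex.I * (ω : ℂ)) ^ 2 * ρ z‖
        < ‖deriv F (Complex.I * (ω : ℂ))‖ * R :=
  stmt_4_general F ρ ω R₁ R M hρM hM0 lamStar b c hlam hc hb hsq1 hsq2 hsub
end

section
/- Let ω > 0, γ > 0, c ≠ 0 real, and D ∈ ℝ. Define λ* = iω − (c²/ω)·[iD + 2/(γω)]^{-1} where iD + 2/(γω) ≠ 0. Then Re λ* = −(2γc²)/(4 + γ²ω²D²) < 0 and Im λ* = ω + (c²/ω)·D/(4/(γ²ω²) + D²). -/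
/-! Writing `a = 2/(γω) > 0`, we have `(iD + a)⁻¹ = (a - iD)/(a² + D²)`, so `λ*` has real part
`-(c²/ω)·a/(a² + D²)` and imaginary part `ω + (c²/ω)·D/(a² + D²)`; clearing `γω` gives the stated
formulas, and the real part is negative because `a`, `c²/ω` are positive. -/

open Complex

lemma re_I_mul_sub_mul_inv (ω r a D : ℝ) :
    (I * ω - r * (I * D + a)⁻¹).re = -(r * a / (a ^ 2 + D ^ 2)) := by
  simp only [sub_re, mul_re, I_re, ofReal_re, zero_mul, I_im, ofReal_im, mul_zero, sub_self, inv_re,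
    add_re, zero_add, normSq_apply, add_im, mul_im, one_mul, add_zero, inv_im, sub_zero, zero_sub]
  ring

lemma im_I_mul_sub_mul_inv (ω r a D : ℝ) :
    (I * ω - r * (I * D + a)⁻¹).im = ω + r * (D / (a ^ 2 + D ^ 2)) := by
  simp only [sub_im, mul_im, I_re, ofReal_im, mul_zero, I_im, ofReal_re, one_mul, zero_add, inv_im,
    add_im, add_zero, normSq_apply, add_re, mul_re, zero_mul, sub_self, inv_re]
  ring

theorem stmt_9_general (ω γ c D : ℝ) (hω : 0 < ω) (hγ : 0 < γ) (hc : c ≠ 0)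
    (lamStar : ℂ)
    (hlam : lamStar = Complex.I * (ω : ℂ)
      - ((c : ℂ) ^ 2 / (ω : ℂ)) * (Complex.I * (D : ℂ) + 2 / ((γ : ℂ) * (ω : ℂ)))⁻¹) :
    lamStar.re = -(2 * γ * c ^ 2) / (4 + γ ^ 2 * ω ^ 2 * D ^ 2) ∧
    lamStar.re < 0 ∧
    lamStar.im = ω + (c ^ 2 / ω) * (D / (4 / (γ ^ 2 * ω ^ 2) + D ^ 2)) := by
  have hlam' : lamStar = I * ω - ((c ^ 2 / ω : ℝ) : ℂ) * (I * D + ((2 / (γ * ω) : ℝ) : ℂ))⁻¹ := by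
    rw [hlam]; push_cast; rfl
  have hre : lamStar.re = -(2 * γ * c ^ 2) / (4 + γ ^ 2 * ω ^ 2 * D ^ 2) := by
    rw [hlam', re_I_mul_sub_mul_inv]
    field_simp
    ring
  refine ⟨hre, ?_, ?_⟩
  · rw [hre]
    exact div_neg_of_neg_of_pos (by simp only [neg_neg_iff_pos]; positivity) (by positivity)
  · rw [hlam', im_I_mul_sub_mul_inv]
    norm_num [div_pow, mul_pow]

/-- Explicit real and imaginary parts of the approximate eigenvalue
`λ* = iω - (c²/ω)·(iD + 2/(γω))⁻¹`, showing in particular `Re λ* < 0`. -/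
theorem stmt_9 (ω γ c D : ℝ) (hω : 0 < ω) (hγ : 0 < γ) (hc : c ≠ 0)
    (hden : Complex.I * (D : ℂ) + 2 / ((γ : ℂ) * (ω : ℂ)) ≠ 0)
    (lamStar : ℂ)
    (hlam : lamStar = Complex.I * (ω : ℂ)
      - ((c : ℂ) ^ 2 / (ω : ℂ)) * (Complex.I * (D : ℂ) + 2 / ((γ : ℂ) * (ω : ℂ)))⁻¹) :
    lamStar.re = -(2 * γ * c ^ 2) / (4 + γ ^ 2 * ω ^ 2 * D ^ 2) ∧
    lamStar.re < 0 ∧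
    lamStar.im = ω + (c ^ 2 / ω) * (D / (4 / (γ ^ 2 * ω ^ 2) + D ^ 2)) :=
  stmt_9_general ω γ c D hω hγ hc lamStar hlam
end

section
/- Let (e_n) be an orthonormal basis of a separable Hilbert space H, and let (φ_n) be a sequence in H that is ω-linearly independent and satisfies Σ_n ‖φ_n − e_n‖² < ∞. Then (φ_n) is a Riesz basis of H; in particular there exist constants 0 < m ≤ M such that m Σ|a_n|² ≤ ‖Σ a_n φ_n‖² ≤ M Σ|a_n|² for all finitely supported scalar sequences (a_n). -/
/-!
Write `φ n = e n + g n` with `g` square-summable. The operator `K` sending `e n` to `g n` is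
Hilbert–Schmidt, hence compact: it is the norm limit of the finite-rank operators
`x ↦ ∑_{n ∈ s} ⟪e n, x⟫ g n`, with error at most `(∑_{n ∉ s} ‖g n‖²)^{1/2}` by Cauchy–Schwarz.
The operator `1 + K` sends `e n` to `φ n`, and ω-independence of `φ` says exactly that it is
injective, so by the Fredholm alternative it is invertible. The Riesz bounds are then the norms
of `1 + K` and its inverse, applied to `∑ a n • e n`, whose squared norm is `∑ ‖a n‖²`.
-/

open Filter Topology ContinuousLinearMap

section SquareSummable

variable {ι 𝕜 F : Type*} [NormedField 𝕜] [NormedAddCommGroup F] [NormedSpace 𝕜 F]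

theorem summable_mul_and_tsum_mul_le_sqrt_mul_sqrt {f g : ι → ℝ} (hf : ∀ i, 0 ≤ f i)
    (hg : ∀ i, 0 ≤ g i) (hf₂ : Summable fun i => f i ^ 2) (hg₂ : Summable fun i => g i ^ 2) :
    (Summable fun i => f i * g i) ∧
      ∑' i, f i * g i ≤ √(∑' i, f i ^ 2) * √(∑' i, g i ^ 2) := by
  simp_rw [← Real.rpow_two, Real.sqrt_eq_rpow] at hf₂ hg₂ ⊢
  exact Real.summable_and_inner_le_Lp_mul_Lq_tsum_of_nonneg .two_two hf hg hf₂ hg₂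

theorem summable_norm_smul_of_sq_summable {f : ι → 𝕜} {g : ι → F}
    (hf : Summable fun i => ‖f i‖ ^ 2) (hg : Summable fun i => ‖g i‖ ^ 2) :
    Summable fun i => ‖f i • g i‖ := by
  have := (summable_mul_and_tsum_mul_le_sqrt_mul_sqrt (f := fun i => ‖f i‖) (g := fun i => ‖g i‖)
      (fun _ => norm_nonneg _) (fun _ => norm_nonneg _) hf hg).1
  exact this.congr fun i => (norm_smul _ _).symm

theorem norm_tsum_smul_le_sqrt_mul_sqrt {f : ι → 𝕜} {g : ι → F}
    (hf : Summable fun i => ‖f i‖ ^ 2) (hg : Summable fun i => ‖g i‖ ^ 2) :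
    ‖∑' i, f i • g i‖ ≤ √(∑' i, ‖f i‖ ^ 2) * √(∑' i, ‖g i‖ ^ 2) := by
  calc ‖∑' i, f i • g i‖ ≤ ∑' i, ‖f i • g i‖ :=
        norm_tsum_le_tsum_norm (summable_norm_smul_of_sq_summable hf hg)
    _ = ∑' i, ‖f i‖ * ‖g i‖ := by simp only [norm_smul]
    _ ≤ _ := (summable_mul_and_tsum_mul_le_sqrt_mul_sqrt (fun _ => norm_nonneg _)
      (fun _ => norm_nonneg _) hf hg).2

end SquareSummable

theorem Orthonormal.norm_sum_smul_sq {ι 𝕜 E : Type*} [RCLike 𝕜] [NormedAddCommGroup E]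
    [InnerProductSpace 𝕜 E] {v : ι → E} (hv : Orthonormal 𝕜 v) (a : ι → 𝕜) (s : Finset ι) :
    ‖∑ i ∈ s, a i • v i‖ ^ 2 = ∑ i ∈ s, ‖a i‖ ^ 2 := by
  simpa using hv.orthogonalFamily.norm_sum a s

theorem ContinuousLinearEquiv.exists_sq_norm_bounds {𝕜 E F : Type*} [NontriviallyNormedField 𝕜]
    [NormedAddCommGroup E] [NormedSpace 𝕜 E] [NormedAddCommGroup F] [NormedSpace 𝕜 F]
    (T : E ≃L[𝕜] F) :
    ∃ m M : ℝ, 0 < m ∧ m ≤ M ∧ ∀ x, m * ‖x‖ ^ 2 ≤ ‖T x‖ ^ 2 ∧ ‖T x‖ ^ 2 ≤ M * ‖x‖ ^ 2 := by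
  set c := ‖(T.symm : F →L[𝕜] E)‖ + 1
  set C := ‖(T : E →L[𝕜] F)‖ + 1
  have hc : 1 ≤ c := le_add_of_nonneg_left (norm_nonneg _)
  have hC : 1 ≤ C := le_add_of_nonneg_left (norm_nonneg _)
  refine ⟨(c ^ 2)⁻¹, C ^ 2, by positivity,
    (inv_le_one_of_one_le₀ (one_le_pow₀ hc)).trans (one_le_pow₀ hC), fun x => ⟨?_, ?_⟩⟩
  · have : ‖x‖ ≤ c * ‖T x‖ := calc
      ‖x‖ = ‖(T.symm : F →L[𝕜] E) (T x)‖ := by simp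
      _ ≤ ‖(T.symm : F →L[𝕜] E)‖ * ‖T x‖ := le_opNorm _ _
      _ ≤ c * ‖T x‖ := by gcongr; exact le_add_of_nonneg_right zero_le_one
    rw [inv_mul_le_iff₀ (by positivity), ← mul_pow]
    gcongr
  · have : ‖T x‖ ≤ C * ‖x‖ := calc
      ‖T x‖ = ‖(T : E →L[𝕜] F) x‖ := rfl
      _ ≤ ‖(T : E →L[𝕜] F)‖ * ‖x‖ := le_opNorm _ _
      _ ≤ C * ‖x‖ := by gcongr; exact le_add_of_nonneg_right zero_le_one
    rw [← mul_pow]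
    gcongr

theorem IsCompactOperator.isUnit_one_add {𝕜 X : Type*} [NontriviallyNormedField 𝕜]
    [NormedAddCommGroup X] [NormedSpace 𝕜 X] [CompleteSpace X] {K : X →L[𝕜] X}
    (hK : IsCompactOperator K) (hinj : Function.Injective ⇑(1 + K)) : IsUnit (1 + K) := by
  rcases hK.hasEigenvalue_or_mem_resolventSet (neg_ne_zero.2 one_ne_zero : (-1 : 𝕜) ≠ 0)
    with h | h
  · obtain ⟨v, hv⟩ := h.exists_hasEigenvector
    refine absurd (hinj ?_) hv.2
    have : K v = -v := by simpa using hv.apply_eq_smul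
    simp [this]
  · rw [spectrum.mem_resolventSet_iff, map_neg, map_one, ← neg_add', IsUnit.neg_iff] at h
    exact h

namespace HilbertBasis

variable {ι 𝕜 E F : Type*} [RCLike 𝕜] [NormedAddCommGroup E] [InnerProductSpace 𝕜 E]
  [NormedAddCommGroup F] [NormedSpace 𝕜 F] (b : HilbertBasis ι 𝕜 E)

theorem hasSum_sq_norm_repr (x : E) : HasSum (fun i => ‖b.repr x i‖ ^ 2) (‖x‖ ^ 2) := by
  simpa using lp.hasSum_norm (p := 2) (by norm_num) (b.repr x)

theorem norm_tsum_repr_smul_le {g : ι → F} (hg : Summable fun i => ‖g i‖ ^ 2) (x : E) :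
    ‖∑' i, b.repr x i • g i‖ ≤ √(∑' i, ‖g i‖ ^ 2) * ‖x‖ := by
  have h := norm_tsum_smul_le_sqrt_mul_sqrt (b.hasSum_sq_norm_repr x).summable hg
  rwa [(b.hasSum_sq_norm_repr x).tsum_eq, Real.sqrt_sq (norm_nonneg x), mul_comm] at h

section constrL

variable [CompleteSpace F] {g : ι → F} (hg : Summable fun i => ‖g i‖ ^ 2)
include hg

theorem summable_repr_smul (x : E) : Summable fun i => b.repr x i • g i :=
  (summable_norm_smul_of_sq_summable (b.hasSum_sq_norm_repr x).summable hg).of_norm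

noncomputable def constrL : E →L[𝕜] F :=
  LinearMap.mkContinuous
    { toFun x := ∑' i, b.repr x i • g i
      map_add' x y := by
        simp only [map_add, lp.coeFn_add, Pi.add_apply, add_smul]
        exact (b.summable_repr_smul hg x).tsum_add (b.summable_repr_smul hg y)
      map_smul' c x := by
        simp only [map_smul, lp.coeFn_smul, Pi.smul_apply, smul_eq_mul, mul_smul,
          RingHom.id_apply]
        exact (b.summable_repr_smul hg x).tsum_const_smul c }
    (√(∑' i, ‖g i‖ ^ 2)) (b.norm_tsum_repr_smul_le hg)

theorem hasSum_constrL (x : E) : HasSum (fun i => b.repr x i • g i) (b.constrL hg x) :=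
  (b.summable_repr_smul hg x).hasSum

theorem constrL_basis [DecidableEq ι] (i : ι) : b.constrL hg (b i) = g i := by
  refine (b.hasSum_constrL hg (b i)).unique ?_
  convert hasSum_single i fun j hj => ?_ <;> simp [b.repr_self, lp.single_apply, *]

theorem norm_constrL_sub_sum_le (s : Finset ι) :
    ‖b.constrL hg - ∑ i ∈ s, (toSpanSingleton 𝕜 (g i)).comp (innerSL 𝕜 (b i))‖ ≤
      √(∑' i : {i // i ∉ s}, ‖g i‖ ^ 2) := by
  set t : Set ι := (↑s)ᶜ
  have hnorm : (fun i => ‖t.indicator g i‖ ^ 2) = t.indicator fun i => ‖g i‖ ^ 2 :=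
    (Set.indicator_comp_of_zero (g := fun v : F => ‖v‖ ^ 2) (by simp)).symm
  have hgt : Summable fun i => ‖t.indicator g i‖ ^ 2 := hnorm ▸ hg.indicator t
  refine opNorm_le_bound _ (Real.sqrt_nonneg _) fun x => ?_
  have hx : (b.constrL hg - ∑ i ∈ s, (toSpanSingleton 𝕜 (g i)).comp (innerSL 𝕜 (b i))) x =
      ∑' i, b.repr x i • t.indicator g i := by
    simp only [sub_apply, sum_apply, comp_apply, toSpanSingleton_apply, innerSL_apply_apply,
      ← b.repr_apply_apply, ← Set.indicator_smul_apply, ← tsum_subtype,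
      ← (b.hasSum_constrL hg x).tsum_eq, ← (b.summable_repr_smul hg x).sum_add_tsum_compl (s := s)]
    abel
  calc ‖(b.constrL hg - ∑ i ∈ s, (toSpanSingleton 𝕜 (g i)).comp (innerSL 𝕜 (b i))) x‖
      ≤ √(∑' i, ‖t.indicator g i‖ ^ 2) * ‖x‖ := hx ▸ b.norm_tsum_repr_smul_le hgt x
    _ = √(∑' i : {i // i ∉ s}, ‖g i‖ ^ 2) * ‖x‖ := by rw [hnorm, ← tsum_subtype]; rfl

theorem isCompactOperator_constrL : IsCompactOperator (b.constrL hg) := by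
  refine isCompactOperator_of_tendsto (l := atTop)
    (F := fun s : Finset ι => ∑ i ∈ s, (toSpanSingleton 𝕜 (g i)).comp (innerSL 𝕜 (b i)))
    ?_ (Eventually.of_forall fun s => ?_)
  · rw [tendsto_iff_norm_sub_tendsto_zero]
    refine squeeze_zero (fun _ => norm_nonneg _)
      (fun s => norm_sub_rev (E := E →L[𝕜] F) _ _ ▸ b.norm_constrL_sub_sum_le hg s) ?_
    simpa using (tendsto_tsum_compl_atTop_zero fun i => ‖g i‖ ^ 2).sqrt
  · exact Submodule.sum_mem (compactOperator _ _ _) fun i _ =>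
      (isCompactOperator_of_locallyCompactSpace_dom (innerSL 𝕜 (b i))).clm_comp
        (toSpanSingleton 𝕜 (g i))

end constrL

variable [CompleteSpace E] {φ : ι → E} (hφ : Summable fun i => ‖φ i - b i‖ ^ 2)
include hφ

theorem hasSum_repr_smul_one_add_constrL (x : E) :
    HasSum (fun i => b.repr x i • φ i) ((1 + b.constrL hφ) x) := by
  simpa [smul_sub] using (b.hasSum_repr x).add (b.hasSum_constrL hφ x)

theorem exists_continuousLinearEquiv_of_summable_sq_norm_sub
    (hindep : ∀ a : ι → 𝕜, HasSum (fun i => a i • φ i) 0 → a = 0) :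
    ∃ T : E ≃L[𝕜] E, ∀ i, T (b i) = φ i := by
  classical
  have hinj : Function.Injective ⇑(1 + b.constrL hφ) := by
    refine (injective_iff_map_eq_zero _).2 fun x hx => ?_
    have := hindep _ (hx ▸ b.hasSum_repr_smul_one_add_constrL hφ x)
    exact b.repr.map_eq_zero_iff.1 (lp.ext this)
  obtain ⟨T, hT⟩ := (b.isCompactOperator_constrL hφ).isUnit_one_add hinj
  exact ⟨.ofUnit T, fun i => by simp [ContinuousLinearEquiv.ofUnit, hT, constrL_basis]⟩

end HilbertBasis

/-- Bari's theorem: a sequence that is ω-linearly independent and quadratically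
close to an orthonormal basis is a Riesz basis. -/
theorem stmt_13 (H : Type*) [NormedAddCommGroup H] [InnerProductSpace ℂ H]
    [CompleteSpace H]
    (e : HilbertBasis ℕ ℂ H) (φ : ℕ → H)
    (hindep : ∀ a : ℕ → ℂ, HasSum (fun n => a n • φ n) 0 → a = 0)
    (hquad : Summable (fun n => ‖φ n - e n‖ ^ 2)) :
    (∃ T : H ≃L[ℂ] H, ∀ n, T (e n) = φ n) ∧
    ∃ m M : ℝ, 0 < m ∧ m ≤ M ∧
      ∀ (s : Finset ℕ) (a : ℕ → ℂ),
        m * ∑ n ∈ s, ‖a n‖ ^ 2 ≤ ‖∑ n ∈ s, a n • φ n‖ ^ 2 ∧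
        ‖∑ n ∈ s, a n • φ n‖ ^ 2 ≤ M * ∑ n ∈ s, ‖a n‖ ^ 2 := by
  obtain ⟨T, hT⟩ := e.exists_continuousLinearEquiv_of_summable_sq_norm_sub hquad hindep
  obtain ⟨m, M, hm, hmM, hbounds⟩ := T.exists_sq_norm_bounds
  refine ⟨⟨T, hT⟩, m, M, hm, hmM, fun s a => ?_⟩
  have hsum : ∑ n ∈ s, a n • φ n = T (∑ n ∈ s, a n • e n) := by simp [hT]
  rw [hsum, ← e.orthonormal.norm_sum_smul_sq a s]
  exact hbounds _
end

section
/- Let Ω = diag(ω₁, ω₂, …) with ω_j > 0, c = (c_j) ∈ ℓ², γ > 0, and define on H = ℓ² × ℓ² the operator A(q,p) = (−iΩq + Ǎ(q+p), iΩp + Ǎ(q+p)) where Ǎx = −(γ/2)⟨c, x⟩ c (a rank-one perturbation). Then for λ = iω_k (some k), the vector equation (A − λI)(q,p) = (q̂,p̂) is solvable for every (q̂,p̂) ∈ H with explicit solution q_j = −(q̂_j − (c_j/c_k)p̂_k)/(iω_j + iω_k), p_j = (p̂_j − (c_j/c_k)p̂_k)/(iω_j − iω_k) for j ≠ k, and p_k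 = −(1/c_k)(2p̂_k/(γc_k) + Σ_ι c_ι q_ι + Σ_{ι≠k} c_ι p_ι); in particular iω_k belongs to the resolvent set of A when c_k ≠ 0. -/
/-!
At `λ = iω_k` the resolvent equations are diagonal except for the scalar coupling
`S = Σ cι (qι + pι)`. In the `k`-th `p`-equation the diagonal coefficient `iω_k - iω_k` vanishes,
so that equation reads `-(γ/2) S c_k = p̂_k` and forces `S = -2 p̂_k / (γ c_k)`; the free value
`p_k` is chosen to make `S` take exactly this value. With `S` known, every other component is
obtained by dividing by `-i(ω_j + ω_k)` or by `i(ω_j - ω_k)`, `j ≠ k`. Both stay away from zero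
(`ω_k > 0`, and `ω` is strictly monotone on `ℕ`), so `q` and `p` lie in `ℓ²`, and the coupling
sums converge as products of two `ℓ²` sequences.
-/

open Complex
open scoped ENNReal

variable {α : Type*}

theorem memℓp_two_iff {E : Type*} [NormedAddCommGroup E] {f : α → E} :
    Memℓp f 2 ↔ Summable fun i => ‖f i‖ ^ 2 := by
  rw [memℓp_gen_iff (by norm_num)]
  simp only [ENNReal.toReal_ofNat, Real.rpow_ofNat]

theorem Memℓp.summable_mul {𝕜 : Type*} [NormedRing 𝕜] [CompleteSpace 𝕜] {f g : α → 𝕜}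
    (hf : Memℓp f 2) (hg : Memℓp g 2) : Summable fun i => f i * g i :=
  (lp.summable_mul (by simpa using Real.HolderConjugate.two_two) ⟨f, hf⟩ ⟨g, hg⟩).of_norm_bounded
    fun i => norm_mul_le _ _

theorem Memℓp.div_of_bddAbove {𝕜 : Type*} [NormedDivisionRing 𝕜] {p : ℝ≥0∞} {f d : α → 𝕜}
    (hf : Memℓp f p) (hd : BddAbove (Set.range fun i => ‖d i‖⁻¹)) :
    Memℓp (fun i => f i / d i) p := by
  obtain ⟨C, hC⟩ := hd
  refine (hf.norm.const_mul C).mono fun i => ?_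
  rw [norm_div, div_eq_inv_mul]
  exact mul_le_mul_of_nonneg_right (hC ⟨i, rfl⟩) (norm_nonneg _)

theorem Memℓp.add_single [DecidableEq α] {E : Type*} [NormedAddCommGroup E] {p : ℝ≥0∞}
    {f : α → E} (hf : Memℓp f p) (i : α) (a : E) : Memℓp (f + Pi.single i a) p :=
  hf.add (lp.memℓp (lp.single (E := fun _ => E) p i a))

theorem bddAbove_range_inv_abs_add {ω : α → ℝ} (hω : ∀ j, 0 ≤ ω j) {k : α} (hk : 0 < ω k) :
    BddAbove (Set.range fun j => |ω j + ω k|⁻¹) := by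
  refine ⟨(ω k)⁻¹, ?_⟩
  rintro _ ⟨j, rfl⟩
  dsimp only
  rw [abs_of_pos (by linarith [hω j])]
  exact inv_anti₀ hk (by linarith [hω j])

theorem StrictMono.bddAbove_range_inv_abs_sub {ω : ℕ → ℝ} (hω : StrictMono ω) (k : ℕ) :
    BddAbove (Set.range fun j => |ω j - ω k|⁻¹) := by
  refine Filter.IsBoundedUnder.bddAbove_range_of_cofinite ?_
  rw [Nat.cofinite_eq_atTop]
  refine Filter.isBoundedUnder_of_eventually_le (a := (ω (k + 1) - ω k)⁻¹) ?_
  filter_upwards [Filter.eventually_gt_atTop k] with j hj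
  have hgap : ω (k + 1) - ω k ≤ ω j - ω k := by linarith [hω.monotone hj]
  rw [abs_of_pos (by linarith [hω hj])]
  exact inv_anti₀ (by linarith [hω k.lt_succ_self]) hgap

theorem norm_I_mul_add_I_mul (x y : ℝ) : ‖I * x + I * y‖ = |x + y| := by
  rw [← mul_add, ← ofReal_add, norm_mul, norm_I, one_mul, norm_real, Real.norm_eq_abs]

theorem norm_I_mul_sub_I_mul (x y : ℝ) : ‖I * x - I * y‖ = |x - y| := by
  rw [← mul_sub, ← ofReal_sub, norm_mul, norm_I, one_mul, norm_real, Real.norm_eq_abs]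

theorem Memℓp.div_I_mul_add_I_mul {p : ℝ≥0∞} {ω : α → ℝ} (hω : ∀ j, 0 ≤ ω j) {k : α}
    (hk : 0 < ω k) {r : α → ℂ} (hr : Memℓp r p) :
    Memℓp (fun j => r j / (I * ω j + I * ω k)) p :=
  hr.div_of_bddAbove <| by
    simpa only [norm_I_mul_add_I_mul] using bddAbove_range_inv_abs_add hω hk

theorem StrictMono.memℓp_of_eq_div_I_mul_sub {p : ℝ≥0∞} {ω : ℕ → ℝ} (hω : StrictMono ω)
    {k : ℕ} {r f : ℕ → ℂ} (hr : Memℓp r p)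
    (hf : ∀ j, j ≠ k → f j = r j / (I * ω j - I * ω k)) : Memℓp f p := by
  have hd : BddAbove (Set.range fun j => ‖I * ω j - I * ω k‖⁻¹) := by
    simpa only [norm_I_mul_sub_I_mul] using hω.bddAbove_range_inv_abs_sub k
  -- at `j = k` the quotient divides by zero, so it vanishes and `f k` is carried by the single
  have hsplit : f = (fun j => r j / (I * ω j - I * ω k)) + Pi.single k (f k) := by
    funext j
    by_cases hj : j = k
    · subst hj
      simp
    · simp [hf j hj, hj]
  rw [hsplit]
  exact (hr.div_of_bddAbove hd).add_single k (f k)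

theorem tsum_mul_add_eq_neg_of_apply_eq [DecidableEq α] {𝕜 : Type*} [NormedField 𝕜]
    {c q p : α → 𝕜} {k : α} (hcq : Summable fun i => c i * q i)
    (hcp : Summable fun i => c i * p i) (hck : c k ≠ 0) (a : 𝕜)
    (hpk : p k = -(1 / c k) * (a + (∑' i, c i * q i) + ∑' i, if i = k then 0 else c i * p i)) :
    ∑' i, c i * (q i + p i) = -a := by
  simp_rw [mul_add]
  rw [hcq.tsum_add hcp, hcp.tsum_eq_add_tsum_ite k, hpk]
  field_simp
  ring

/-- The point `iω_k` belongs to the resolvent set of the rank-one-perturbed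
generator `A`: the equation `(A - iω_k I)(q,p) = (q̂,p̂)` is solvable for every
`(q̂,p̂) ∈ ℓ² × ℓ²`, with the explicit solution formulas. -/
theorem stmt_18 (ω c : ℕ → ℝ) (hω : StrictMono ω) (hωpos : ∀ j, 0 < ω j)
    (hc2 : Summable (fun j => (c j) ^ 2))
    (γ : ℝ) (hγ : 0 < γ) (k : ℕ) (hck : c k ≠ 0)
    (qhat phat : ℕ → ℂ)
    (hqhat : Summable (fun j => ‖qhat j‖ ^ 2))
    (hphat : Summable (fun j => ‖phat j‖ ^ 2))
    (q p : ℕ → ℂ)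
    (hq : ∀ j, q j = -(qhat j - ((c j : ℂ) / (c k : ℂ)) * phat k) /
      (Complex.I * (ω j : ℂ) + Complex.I * (ω k : ℂ)))
    (hp : ∀ j, p j = if j = k then
        -(1 / (c k : ℂ)) * (2 * phat k / ((γ : ℂ) * (c k : ℂ))
          + (∑' ι, (c ι : ℂ) * q ι)
          + ∑' ι, if ι = k then 0 else (c ι : ℂ) * p ι)
      else (phat j - ((c j : ℂ) / (c k : ℂ)) * phat k) /
        (Complex.I * (ω j : ℂ) - Complex.I * (ω k : ℂ))) :
    Summable (fun j => ‖q j‖ ^ 2) ∧ Summable (fun j => ‖p j‖ ^ 2) ∧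
    Summable (fun ι => (c ι : ℂ) * (q ι + p ι)) ∧
    (∀ j, (-(Complex.I * (ω j : ℂ)) - Complex.I * (ω k : ℂ)) * q j
        - ((γ : ℂ) / 2) * (∑' ι, (c ι : ℂ) * (q ι + p ι)) * (c j : ℂ) = qhat j) ∧
    (∀ j, (Complex.I * (ω j : ℂ) - Complex.I * (ω k : ℂ)) * p j
        - ((γ : ℂ) / 2) * (∑' ι, (c ι : ℂ) * (q ι + p ι)) * (c j : ℂ) = phat j) := by
  have hck' : (c k : ℂ) ≠ 0 := ofReal_ne_zero.mpr hck
  have hγ' : (γ : ℂ) ≠ 0 := ofReal_ne_zero.mpr hγ.ne'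
  have hcℓ : Memℓp (fun j => (c j : ℂ)) 2 := memℓp_two_iff.2 (by simpa using hc2)
  have hshift : Memℓp (fun j => (c j : ℂ) / c k * phat k) 2 :=
    (hcℓ.const_mul (phat k / c k)).mono' fun j => (congrArg norm (by ring)).le
  have hqℓ : Memℓp q 2 := by
    rw [funext hq]
    exact ((memℓp_two_iff.2 hqhat).sub hshift).neg.div_I_mul_add_I_mul
      (fun j => (hωpos j).le) (hωpos k)
  have hpℓ : Memℓp p 2 := hω.memℓp_of_eq_div_I_mul_sub ((memℓp_two_iff.2 hphat).sub hshift)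
    fun j hj => (hp j).trans (if_neg hj)
  have hS := tsum_mul_add_eq_neg_of_apply_eq (hcℓ.summable_mul hqℓ) (hcℓ.summable_mul hpℓ) hck' _
    (by rw [hp k, if_pos rfl])
  refine ⟨memℓp_two_iff.1 hqℓ, memℓp_two_iff.1 hpℓ, hcℓ.summable_mul (hqℓ.add hpℓ),
    fun j => ?_, fun j => ?_⟩
  · have hd : (ω j : ℂ) + ω k ≠ 0 := by
      exact_mod_cast (by linarith [hωpos j, hωpos k] : ω j + ω k ≠ 0)
    rw [hS, hq j]
    field_simp
    ring
  · rw [hS]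
    by_cases hj : j = k
    · subst hj
      field_simp
      ring
    · have hd : (ω j : ℂ) - ω k ≠ 0 := by
        exact_mod_cast sub_ne_zero.2 (hω.injective.ne hj)
      rw [hp j, if_neg hj]
      field_simp
      ring
end
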